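/- Let f ∈ ℂ(X) be a rational function of degree d ≥ 2 and suppose f^{(2)}(X) = a(X - b)^{d²} with a ≠ 0. Then f(X) = a'X^d or f(X) = a'X^{-d} for some a' ∈ ℂ* (after noting b = 0). -/

import Mathlib

noncomputable section
open Polynomial OnePoint
open scoped Classical

/-- degree of a rational function -/
def ratDeg {K : Type*} [Field K] (f : RatFunc K) : ℕ := max f.num.natDegree f.denom.natDegree

/-- composition g ∘ h of rational functions -/
def ratComp {K : Type*} [Field K] (g h : RatFunc K) : RatFunc K :=
  Polynomial.aeval h g.num / Polynomial.aeval h g.denom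

local notation "ι" => algebraMap (Polynomial ℂ) (RatFunc ℂ)

private lemma aeval_algMap (P p : Polynomial ℂ) : aeval (ι P) p = ι (p.comp P) := by
  rw [comp_eq_aeval]
  have h2 := aeval_algHom_apply (IsScalarTower.toAlgHom ℂ (Polynomial ℂ) (RatFunc ℂ)) P p
  simpa [IsScalarTower.coe_toAlgHom'] using h2

private lemma dvdPowRoot (u : Polynomial ℂ) (k b : ℂ) (m : ℕ) (hk : k ≠ 0) (hm : 0 < m)
    (hdvd : u ∣ C k * (X - C b) ^ m) (x : ℂ) (hx : u.eval x = 0) : x = b := by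
  obtain ⟨v, hv⟩ := hdvd
  have h0 : k * (x - b) ^ m = 0 := by
    have := congrArg (eval x) hv
    simpa [hx] using this
  have h2 : (x - b) ^ m = 0 := by
    rcases mul_eq_zero.mp h0 with h | h
    · exact absurd h hk
    · exact h
  exact sub_eq_zero.mp (pow_eq_zero_iff hm.ne' |>.mp h2)

private lemma rootsEqAux (u : Polynomial ℂ) (b : ℂ)
    (hroots : ∀ x, u.eval x = 0 → x = b) :
    u = C u.leadingCoeff * (X - C b) ^ u.natDegree := by
  have hsp := IsAlgClosed.splits u
  have hcard : u.roots.card = u.natDegree := (splits_iff_card_roots).mp hsp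
  have hrep : u.roots = Multiset.replicate u.natDegree b := by
    rw [Multiset.eq_replicate]
    exact ⟨hcard, fun x hx => hroots x ((mem_roots'.mp hx).2)⟩
  conv_lhs => rw [hsp.eq_prod_roots]
  rw [hrep, Multiset.map_replicate, Multiset.prod_replicate]

private lemma homKeyRat (g p q : Polynomial ℂ) (d : ℕ) (hg : g.natDegree < d + 1) (hq : q ≠ 0) :
    ι (∑ i ∈ Finset.range (d+1), C (g.coeff i) * p ^ i * q ^ (d - i))
    = (ι q) ^ d * aeval ((ι p) / (ι q)) g := by
  have hQ : (ι q) ≠ 0 := RatFunc.algebraMap_ne_zero hq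
  rw [aeval_eq_sum_range' hg, map_sum, Finset.mul_sum]
  refine Finset.sum_congr rfl fun i hi => ?_
  have hid : i ≤ d := Nat.lt_succ_iff.mp (Finset.mem_range.mp hi)
  have hsplit : (ι q) ^ d = (ι q) ^ (d - i) * (ι q) ^ i := by
    rw [← pow_add, Nat.sub_add_cancel hid]
  rw [map_mul, map_mul, map_pow, map_pow, Algebra.smul_def, RatFunc.algebraMap_eq_C,
    ← RatFunc.algebraMap_C, div_pow, hsplit]
  field_simp

private lemma homKeyEval (g : Polynomial ℂ) (d : ℕ) (hg : g.natDegree < d + 1) (P Q : ℂ)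
    (hQ : Q ≠ 0) :
    (∑ i ∈ Finset.range (d+1), g.coeff i * P ^ i * Q ^ (d - i)) = Q ^ d * g.eval (P / Q) := by
  rw [eval_eq_sum_range' hg, Finset.mul_sum]
  refine Finset.sum_congr rfl fun i hi => ?_
  have hid : i ≤ d := Nat.lt_succ_iff.mp (Finset.mem_range.mp hi)
  have hsplit : Q ^ d = Q ^ (d - i) * Q ^ i := by
    rw [← pow_add, Nat.sub_add_cancel hid]
  rw [div_pow, hsplit]
  field_simp

private lemma divDivSame (x y c : RatFunc ℂ) (hc : c ≠ 0) : (x/c)/(y/c) = x/y := by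
  rcases eq_or_ne y 0 with rfl|hy
  · simp
  · field_simp

private lemma case1poly (P : Polynomial ℂ) (d : ℕ) (hd : 2 ≤ d) (hPdeg : P.natDegree = d)
    (a b : ℂ) (ha : a ≠ 0) (h : P.comp P = C a * (X - C b) ^ (d ^ 2)) :
    b = 0 ∧ ∃ α : ℂ, α ≠ 0 ∧ P = C α * X ^ d := by
  set n := d ^ 2 with hn
  have hd0 : d ≠ 0 := by omega
  have hn4 : 4 ≤ n := by
    calc 4 = 2 * 2 := rfl
    _ ≤ d * d := Nat.mul_le_mul hd hd
    _ = n := by rw [hn, sq]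
  have hnC : (n : ℂ) ≠ 0 := Nat.cast_ne_zero.mpr (by omega)
  have hwder : derivative (C a * (X - C b) ^ n) = C (a * n) * (X - C b) ^ (n - 1) := by
    simp [derivative_pow]
    ring
  have hder : derivative P * (derivative P).comp P = C (a * n) * (X - C b) ^ (n - 1) := by
    rw [← derivative_comp, h, hwder]
  have hP'ne : derivative P ≠ 0 := by
    intro h0
    have := eq_C_of_derivative_eq_zero h0
    rw [this] at hPdeg
    simp at hPdeg
    omega
  have hP'roots : ∀ x, (derivative P).eval x = 0 → x = b := fun x hx =>
    dvdPowRoot (derivative P) (a * n) b (n - 1) (mul_ne_zero ha hnC) (by omega)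
      ⟨(derivative P).comp P, hder.symm⟩ x hx
  have hP'deg : (derivative P).natDegree = d - 1 := by
    refine le_antisymm (by simpa [hPdeg] using natDegree_derivative_le P) ?_
    apply le_natDegree_of_ne_zero
    rw [coeff_derivative]
    have : P.coeff (d - 1 + 1) = P.leadingCoeff := by
      rw [← hPdeg, ← coeff_natDegree]
      congr 1
      omega
    rw [this]
    exact mul_ne_zero (leadingCoeff_ne_zero.mpr (fun h0 => by simp [h0] at hPdeg; omega))
      (Nat.cast_add_one_ne_zero (d - 1))
  set k' := (derivative P).leadingCoeff with hk'
  have hk'0 : k' ≠ 0 := leadingCoeff_ne_zero.mpr hP'ne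
  have hP'shape : derivative P = C k' * (X - C b) ^ (d - 1) := by
    rw [← hP'deg]; exact rootsEqAux _ b hP'roots
  set α := k' / d with hαdef
  have hα : α ≠ 0 := div_ne_zero hk'0 (Nat.cast_ne_zero.mpr hd0)
  have hαd : α * (d : ℂ) = k' := div_mul_cancel₀ k' (Nat.cast_ne_zero.mpr hd0)
  have hGder : derivative (P - C α * (X - C b) ^ d) = 0 := by
    rw [derivative_sub, hP'shape, derivative_mul, derivative_C, derivative_pow]
    simp only [derivative_sub, derivative_X, derivative_C, sub_zero, mul_one, zero_mul, zero_add]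
    rw [← hαd, C_mul]
    ring
  have hG := eq_C_of_derivative_eq_zero hGder
  set β := (P - C α * (X - C b) ^ d).coeff 0 with hβdef
  have hPshape : P = C α * (X - C b) ^ d + C β := by
    rw [← hG]; ring
  have h1 : P.comp P = C α * (P - C b) ^ d + C β := by
    conv_lhs => rw [show P.comp P = (C α * (X - C b) ^ d + C β).comp P from by rw [← hPshape]]
    simp [add_comp, mul_comp, pow_comp, sub_comp]
  have hkey : C α * (P - C b) ^ d + C β = C a * (X - C b) ^ n := by
    rw [← h1, h]
  have htb : β = b := by
    by_contra ht
    have hudeg : (P - C b).natDegree = d := by rw [natDegree_sub_C, hPdeg]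
    have hune : (P - C b) ≠ 0 := fun h0 => by rw [h0] at hudeg; simp at hudeg; omega
    obtain ⟨x1, hx1⟩ := IsAlgClosed.exists_root (P - C b)
      (by rw [degree_eq_natDegree hune, hudeg]; exact_mod_cast hd0)
    have hPx1 : eval x1 P = b := by
      have := hx1
      simp only [IsRoot, eval_sub, eval_C, sub_eq_zero] at this
      exact this
    have hx1b : x1 ≠ b := by
      intro h0
      rw [h0] at hPx1
      have : eval b P = β := by rw [hPshape]; simp [zero_pow hd0]
      rw [this] at hPx1
      exact ht hPx1
    have hD := congrArg derivative hkey
    rw [derivative_add, derivative_C, add_zero, derivative_mul, derivative_C, zero_mul, zero_add,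
      derivative_pow, hwder] at hD
    have hE := congrArg (eval x1) hD
    simp only [eval_mul, eval_C, eval_pow, eval_sub, eval_X, hPx1, sub_self,
      zero_pow (show d - 1 ≠ 0 by omega), zero_mul, mul_zero] at hE
    have : (x1 - b) ^ (n - 1) = 0 := by
      rcases mul_eq_zero.mp hE.symm with h' | h'
      · exact absurd h' (mul_ne_zero ha hnC)
      · exact h'
    exact hx1b (sub_eq_zero.mp (pow_eq_zero_iff (show n - 1 ≠ 0 by omega) |>.mp this))
  have hPb : eval b P = β := by rw [hPshape]; simp [zero_pow hd0]
  have hb0 : b = 0 := by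
    have hE := congrArg (eval b) hkey
    simp only [eval_add, eval_mul, eval_C, eval_pow, eval_sub, eval_X, hPb, htb, sub_self,
      zero_pow (show d ≠ 0 from hd0), zero_pow (show n ≠ 0 by omega), mul_zero, zero_add] at hE
    exact hE
  have hβ0 : β = 0 := htb.trans hb0
  refine ⟨hb0, α, hα, ?_⟩
  rw [hPshape, hβ0, hb0]
  simp

/-- If `f ∈ ℂ(X)` has degree `d ≥ 2` and
`f^(2)(X) = a(X-b)^(d²)` with `a ≠ 0`, then `b = 0` and `f(X) = a'·X^d` or
`f(X) = a'·X^{-d}` for some `a' ∈ ℂ*`. -/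
theorem stmt_17 (f : RatFunc ℂ) (d : ℕ) (hdeg : ratDeg f = d) (hd : 2 ≤ d)
    (a b : ℂ) (ha : a ≠ 0)
    (hiter : ratComp f f = RatFunc.C a * (RatFunc.X - RatFunc.C b) ^ (d ^ 2)) :
    b = 0 ∧ ∃ a' : ℂ, a' ≠ 0 ∧
      (f = RatFunc.C a' * RatFunc.X ^ d ∨ f = RatFunc.C a' / RatFunc.X ^ d) := by
  have hd0 : d ≠ 0 := by omega
  set n := d ^ 2 with hn
  have hn4 : 4 ≤ n := by
    calc 4 = 2 * 2 := rfl
    _ ≤ d * d := Nat.mul_le_mul hd hd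
    _ = n := by rw [hn, sq]
  set p := f.num with hp
  set q := f.denom with hq
  have hq0 : q ≠ 0 := f.denom_ne_zero
  have hcop : IsCoprime p q := f.isCoprime_num_denom
  have hpd : p.natDegree ≤ d := hdeg ▸ le_max_left _ _
  have hqd : q.natDegree ≤ d := hdeg ▸ le_max_right _ _
  have hf : ι p / ι q = f := f.num_div_denom
  have hQ : ι q ≠ 0 := RatFunc.algebraMap_ne_zero hq0
  set w : Polynomial ℂ := C a * (X - C b) ^ n with hw
  have hw0 : w ≠ 0 := mul_ne_zero (fun h0 => ha (by simpa using (C_eq_zero).mp h0))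
    (pow_ne_zero _ (X_sub_C_ne_zero b))
  have hiter' : ratComp f f = ι w := by
    rw [hiter, hw]
    simp [map_mul, map_pow, map_sub, RatFunc.algebraMap_C, RatFunc.algebraMap_X]
  by_cases hqc : q.natDegree = 0
  · -- CASE 1 : q constant, f a polynomial
    obtain ⟨γ, hγq⟩ : ∃ γ : ℂ, q = C γ := ⟨q.coeff 0, eq_C_of_natDegree_eq_zero hqc⟩
    have hγ : γ ≠ 0 := fun h0 => hq0 (by rw [hγq, h0, map_zero])
    have hpdeg : p.natDegree = d := by
      have := hdeg
      rw [ratDeg, ← hp, ← hq, hqc] at this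
      simpa using this
    set P := C γ⁻¹ * p with hP
    have hγP : C γ * P = p := by
      rw [hP, ← mul_assoc, ← C_mul, mul_inv_cancel₀ hγ, C_1, one_mul]
    have hCγ : RatFunc.C γ ≠ 0 := by
      simpa using (map_ne_zero_iff _ (RingHom.injective (RatFunc.C (K := ℂ)))).mpr hγ
    have hfP : f = ι P := by
      rw [← hf, hγq, hP, map_mul, RatFunc.algebraMap_C, RatFunc.algebraMap_C,
        div_eq_iff hCγ, mul_comm (RatFunc.C γ⁻¹), mul_assoc, ← map_mul,
        inv_mul_cancel₀ hγ, map_one, mul_one]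
    have hPdeg : P.natDegree = d := by
      refine le_antisymm (hpdeg ▸ natDegree_C_mul_le γ⁻¹ p) ?_
      calc d = p.natDegree := hpdeg.symm
      _ = (C γ * P).natDegree := by rw [hγP]
      _ ≤ P.natDegree := natDegree_C_mul_le γ P
    have hcomp : ratComp f f = ι (P.comp P) := by
      rw [ratComp, ← hp, ← hq, hγq]
      rw [show (aeval f) (C γ) = RatFunc.C γ by rw [aeval_C, RatFunc.algebraMap_eq_C]]
      rw [hfP, aeval_algMap, ← hγP, mul_comp, C_comp, map_mul, RatFunc.algebraMap_C]
      rw [mul_comm, mul_div_assoc, div_self hCγ, mul_one]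
    have hPP : P.comp P = C a * (X - C b) ^ (d ^ 2) := by
      apply RatFunc.algebraMap_injective ℂ
      rw [← hcomp, hiter', hw, hn]
    obtain ⟨hb0, α, hα, hPα⟩ := case1poly P d hd hPdeg a b ha hPP
    refine ⟨hb0, α, hα, Or.inl ?_⟩
    rw [hfP, hPα]
    simp [map_mul, map_pow, RatFunc.algebraMap_C, RatFunc.algebraMap_X]
  · -- CASE 2 : q nonconstant
    set A := ∑ i ∈ Finset.range (d+1), C (p.coeff i) * p ^ i * q ^ (d - i) with hA
    set B := ∑ i ∈ Finset.range (d+1), C (q.coeff i) * p ^ i * q ^ (d - i) with hB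
    have hAr : ι A = (ι q) ^ d * aeval f p := by
      rw [hA, homKeyRat p p q d (Nat.lt_succ_of_le hpd) hq0, hf]
    have hBr : ι B = (ι q) ^ d * aeval f q := by
      rw [hB, homKeyRat q p q d (Nat.lt_succ_of_le hqd) hq0, hf]
    have hQd : (ι q) ^ d ≠ 0 := pow_ne_zero _ hQ
    have hcompAB : ratComp f f = ι A / ι B := by
      rw [ratComp, ← hp, ← hq,
        show aeval f p = ι A / (ι q) ^ d from by rw [hAr, mul_div_cancel_left₀ _ hQd],
        show aeval f q = ι B / (ι q) ^ d from by rw [hBr, mul_div_cancel_left₀ _ hQd],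
        divDivSame _ _ _ hQd]
    have hABdiv : ι A / ι B = ι w := by rw [← hcompAB, hiter']
    have hB0 : B ≠ 0 := by
      intro h0
      rw [h0, map_zero, div_zero] at hABdiv
      exact RatFunc.algebraMap_ne_zero hw0 hABdiv.symm
    have hBQ : ι B ≠ 0 := RatFunc.algebraMap_ne_zero hB0
    have hAB : A = w * B := by
      apply RatFunc.algebraMap_injective ℂ
      rw [map_mul, ← (div_eq_iff hBQ).mp hABdiv]
    have hsumq : ∀ (g : Polynomial ℂ) (x : ℂ), eval x q = 0 →
        eval x (∑ i ∈ Finset.range (d+1), C (g.coeff i) * p ^ i * q ^ (d - i))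
          = g.coeff d * (eval x p) ^ d := by
      intro g x hx
      rw [eval_finset_sum, Finset.sum_eq_single d]
      · simp
      · intro i hi hne
        have hdi : d - i ≠ 0 := by have := Finset.mem_range.mp hi; omega
        simp [eval_mul, eval_pow, hx, zero_pow hdi]
      · intro hmem; exact absurd (Finset.self_mem_range_succ d) hmem
    have hpev : ∀ x : ℂ, eval x q = 0 → eval x p ≠ 0 := by
      intro x hx h0
      obtain ⟨u, v, huv⟩ := hcop
      have := congrArg (eval x) huv
      simp [hx, h0] at this
    have hcopAB : IsCoprime A B := by
      rw [Polynomial.isCoprime_iff_aeval_ne_zero_of_isAlgClosed (k := ℂ) ℂ A B]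
      intro x
      by_contra hcon
      push_neg at hcon
      obtain ⟨hAx, hBx⟩ := hcon
      have hAx' : eval x A = 0 := by simpa using hAx
      have hBx' : eval x B = 0 := by simpa using hBx
      by_cases hQx : eval x q = 0
      · have h1 := hsumq p x hQx
        have h2 := hsumq q x hQx
        rw [← hA] at h1
        rw [← hB] at h2
        have hPd : p.coeff d = 0 := by
          have h3 := h1.symm.trans hAx'
          rcases mul_eq_zero.mp h3 with h' | h'
          · exact h'
          · exact absurd h' (pow_ne_zero _ (hpev x hQx))
        have hQdc : q.coeff d = 0 := by
          have h3 := h2.symm.trans hBx'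
          rcases mul_eq_zero.mp h3 with h' | h'
          · exact h'
          · exact absurd h' (pow_ne_zero _ (hpev x hQx))
        rcases max_choice p.natDegree q.natDegree with hmx | hmx
        · have hpdd : p.natDegree = d := by rw [ratDeg, ← hp, ← hq, hmx] at hdeg; exact hdeg
          have hpne : p ≠ 0 := fun h0 => by rw [h0] at hpdd; simp at hpdd; omega
          exact (leadingCoeff_ne_zero.mpr hpne) (by rw [leadingCoeff, hpdd]; exact hPd)
        · have hqdd : q.natDegree = d := by rw [ratDeg, ← hp, ← hq, hmx] at hdeg; exact hdeg
          exact (leadingCoeff_ne_zero.mpr hq0) (by rw [leadingCoeff, hqdd]; exact hQdc)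
      · have h1 := homKeyEval p d (Nat.lt_succ_of_le hpd) (eval x p) (eval x q) hQx
        have h2 := homKeyEval q d (Nat.lt_succ_of_le hqd) (eval x p) (eval x q) hQx
        have hevA : eval x A = (eval x q) ^ d * eval (eval x p / eval x q) p := by
          rw [hA, eval_finset_sum, ← h1]
          exact Finset.sum_congr rfl fun i _ => by simp
        have hevB : eval x B = (eval x q) ^ d * eval (eval x p / eval x q) q := by
          rw [hB, eval_finset_sum, ← h2]
          exact Finset.sum_congr rfl fun i _ => by simp
        have hpy : eval (eval x p / eval x q) p = 0 := by
          have h3 := hevA.symm.trans hAx'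
          rcases mul_eq_zero.mp h3 with h' | h'
          · exact absurd h' (pow_ne_zero _ hQx)
          · exact h'
        have hqy : eval (eval x p / eval x q) q = 0 := by
          have h3 := hevB.symm.trans hBx'
          rcases mul_eq_zero.mp h3 with h' | h'
          · exact absurd h' (pow_ne_zero _ hQx)
          · exact h'
        obtain ⟨u, v, huv⟩ := hcop
        have := congrArg (eval (eval x p / eval x q)) huv
        simp [hpy, hqy] at this
    have hBunit : IsUnit B := hcopAB.isUnit_of_dvd' ⟨w, by rw [hAB]; ring⟩ dvd_rfl
    obtain ⟨c, hcu, hBc⟩ := Polynomial.isUnit_iff.mp hBunit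
    have hc0 : c ≠ 0 := hcu.ne_zero
    have hqdeg : q.natDegree = d := by
      have hqdn : q.degree ≠ 0 := by
        rw [degree_eq_natDegree hq0]; exact_mod_cast hqc
      obtain ⟨r, hr⟩ := IsAlgClosed.exists_root q hqdn
      have h1 := hsumq q r hr
      rw [← hB] at h1
      have h2 : eval r B = c := by rw [← hBc]; simp
      have hqcd : q.coeff d ≠ 0 := by
        intro h0
        rw [h0, zero_mul] at h1
        rw [h1] at h2
        exact hc0 h2.symm
      exact le_antisymm hqd (le_natDegree_of_ne_zero hqcd)
    set lc := q.leadingCoeff with hlc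
    have hlc0 : lc ≠ 0 := leadingCoeff_ne_zero.mpr hq0
    have hsp := IsAlgClosed.splits q
    have hcard : q.roots.card = d := ((splits_iff_card_roots).mp hsp).trans hqdeg
    have hqfac : q = C lc * (q.roots.map fun r => X - C r).prod := hsp.eq_prod_roots
    have hqf : ι q * f = ι p := by
      rw [← hf, mul_div_assoc', mul_comm, mul_div_assoc, div_self hQ, mul_one]
    have hBfac : B = C lc * (q.roots.map fun r => p - C r * q).prod := by
      apply RatFunc.algebraMap_injective ℂ
      have haq : aeval f q = RatFunc.C lc * ((q.roots.map fun r => f - RatFunc.C r)).prod := by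
        conv_lhs => rw [hqfac]
        rw [map_mul, aeval_C, RatFunc.algebraMap_eq_C, map_multiset_prod, Multiset.map_map]
        congr 2
        exact Multiset.map_congr rfl fun r _ => by
          simp [Function.comp_apply, RatFunc.algebraMap_eq_C]
      rw [hBr, haq]
      rw [map_mul, RatFunc.algebraMap_C, map_multiset_prod, Multiset.map_map]
      rw [show ((ι) q) ^ d = ((q.roots.map (fun _ => (ι) q)).prod) from by
        rw [Multiset.map_const', Multiset.prod_replicate, hcard]]
      rw [mul_left_comm, ← Multiset.prod_map_mul]
      congr 1
      refine congrArg Multiset.prod (Multiset.map_congr rfl fun r _ => ?_)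
      rw [mul_sub, hqf, Function.comp_apply, map_sub, map_mul, RatFunc.algebraMap_C]
      ring
    have hBCc : IsUnit (C lc * (q.roots.map fun r => p - C r * q).prod) := hBfac ▸ hBunit
    have hprodU : IsUnit ((q.roots.map fun r => p - C r * q).prod) :=
      isUnit_of_mul_isUnit_right hBCc
    have hfactU : ∀ r ∈ q.roots, ∃ cr : ℂ, cr ≠ 0 ∧ p - C r * q = C cr := by
      intro r hr
      have hmem : p - C r * q ∈ q.roots.map (fun r => p - C r * q) :=
        Multiset.mem_map_of_mem _ hr
      rw [← Multiset.prod_erase hmem] at hprodU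
      obtain ⟨cr, hcru, hcr⟩ := Polynomial.isUnit_iff.mp (isUnit_of_mul_isUnit_left hprodU)
      exact ⟨cr, hcru.ne_zero, hcr.symm⟩
    have hrne : q.roots ≠ 0 := by
      intro h0; rw [h0] at hcard; simp at hcard; omega
    obtain ⟨r0, hr0⟩ := Multiset.exists_mem_of_ne_zero hrne
    obtain ⟨c0, hc00, hc0eq⟩ := hfactU r0 hr0
    have hallr : ∀ r ∈ q.roots, r = r0 := by
      intro r hr
      by_contra hne
      obtain ⟨cr, hcr0, hcreq⟩ := hfactU r hr
      have hsub : C (r - r0) * q = C c0 - C cr := by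
        rw [map_sub, ← hc0eq, ← hcreq]; ring
      have hCne : (C (r - r0) : Polynomial ℂ) ≠ 0 := by
        simp only [ne_eq, C_eq_zero]; exact sub_ne_zero.mpr hne
      have hqC : q = C ((r - r0)⁻¹ * (c0 - cr)) := by
        apply mul_left_cancel₀ hCne
        rw [hsub, ← C_mul, ← mul_assoc, mul_inv_cancel₀ (sub_ne_zero.mpr hne), one_mul, map_sub]
      have : q.natDegree = 0 := by rw [hqC]; exact natDegree_C _
      omega
    have hrep : q.roots = Multiset.replicate d r0 := by
      rw [Multiset.eq_replicate]; exact ⟨hcard, hallr⟩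
    have hqr0 : q = C lc * (X - C r0) ^ d := by
      conv_lhs => rw [hqfac]
      rw [hrep, Multiset.map_replicate, Multiset.prod_replicate]
    have hpr0 : p = C r0 * q + C c0 := by rw [← hc0eq]; ring
    have hAfac : A = C r0 * B + C c0 * q ^ d := by
      apply RatFunc.algebraMap_injective ℂ
      rw [hAr]
      conv_lhs => rw [hpr0]
      rw [map_add, map_mul, aeval_C, RatFunc.algebraMap_eq_C, aeval_C, RatFunc.algebraMap_eq_C,
        map_add, map_mul, map_mul, map_pow, RatFunc.algebraMap_C, RatFunc.algebraMap_C, hBr]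
      ring
    have heq : C a * (X - C b) ^ n * C c = C r0 * C c + C c0 * (C lc * (X - C r0) ^ d) ^ d := by
      rw [← hw, hBc, ← hqr0, ← hAfac]
      exact hAB.symm
    set k := c0 * lc ^ d with hk
    have hk0 : k ≠ 0 := mul_ne_zero hc00 (pow_ne_zero _ hlc0)
    have hnd : n = d * d := by rw [hn, sq]
    have hcN : (n : ℂ) ≠ 0 := Nat.cast_ne_zero.mpr (by omega)
    have heq' : C (a * c) * (X - C b) ^ n = C (r0 * c) + C k * (X - C r0) ^ n := by
      calc C (a * c) * (X - C b) ^ n = C a * (X - C b) ^ n * C c := by rw [C_mul]; ring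
      _ = C r0 * C c + C c0 * (C lc * (X - C r0) ^ d) ^ d := heq
      _ = C (r0 * c) + C k * (X - C r0) ^ n := by
          rw [hk, mul_pow, ← map_pow, ← pow_mul, ← hnd, C_mul, C_mul]; ring
    have hD := congrArg derivative heq'
    rw [derivative_add, derivative_C, zero_add, derivative_mul, derivative_C, zero_mul, zero_add,
      derivative_mul, derivative_C, zero_mul, zero_add, derivative_pow, derivative_pow] at hD
    simp only [derivative_sub, derivative_X, derivative_C, sub_zero, mul_one] at hD
    have hEr0 := congrArg (eval r0) hD
    simp only [eval_mul, eval_C, eval_pow, eval_sub, eval_X, sub_self,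
      zero_pow (show n - 1 ≠ 0 by omega), mul_zero] at hEr0
    have hbr0 : b = r0 := by
      have h3 : (r0 - b) ^ (n - 1) = 0 := by
        rcases mul_eq_zero.mp hEr0 with h' | h'
        · exact absurd h' (mul_ne_zero ha hc0)
        · rcases mul_eq_zero.mp h' with h'' | h''
          · exact absurd h'' hcN
          · exact h''
      exact (sub_eq_zero.mp (pow_eq_zero_iff (show n - 1 ≠ 0 by omega) |>.mp h3)).symm
    rw [hbr0] at heq'
    have hE2 := congrArg (eval r0) heq'
    simp only [eval_add, eval_mul, eval_C, eval_pow, eval_sub, eval_X, sub_self,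
      zero_pow (show n ≠ 0 by omega), mul_zero, add_zero] at hE2
    have hr00 : r0 = 0 := by
      rcases mul_eq_zero.mp hE2.symm with h' | h'
      · exact h'
      · exact absurd h' hc0
    have hb0 : b = 0 := hbr0.trans hr00
    have hqX : q = C lc * X ^ d := by rw [hqr0, hr00]; simp
    have hpcc : p = C c0 := by rw [hpr0, hr00]; simp
    refine ⟨hb0, c0 / lc, div_ne_zero hc00 hlc0, Or.inr ?_⟩
    rw [← hf, hqX, hpcc, map_mul, map_pow, RatFunc.algebraMap_C, RatFunc.algebraMap_C,
      RatFunc.algebraMap_X, map_div₀, div_div]
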